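/- arXiv:2503.05017 — 3 statements merged into one kernel-verified Lean document; each statement's English description precedes it below -/
import Mathlib

section
/- Let λ, θ > 0, let A, B : ℝ → ℝ be differentiable, and let u ∈ ℝ be a point with B'(u) ≥ 0. Then the derivatives of all four DRM1 Maxwellian components at u are nonnegative (M₁'(u) ≥ 0, M₂'(u) ≥ 0, M₃'(u) ≥ 0, M₄'(u) ≥ 0) if and only if |A'(u)|/λ + B'(u)/θ² ≤ 1. -/
/-- Monotonicity characterization for the DRM1 Maxwellian: all four components
have nonnegative derivative at `u` iff `|A'(u)|/λ + B'(u)/θ² ≤ 1`. -/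
theorem drm1_monotone_iff
    (lam th : ℝ) (hlam : 0 < lam) (hth : 0 < th)
    (A B : ℝ → ℝ) (hA : Differentiable ℝ A) (hB : Differentiable ℝ B)
    (u : ℝ) (hB' : 0 ≤ deriv B u) :
    (0 ≤ deriv (fun v => (1/2) * (v - A v / lam - B v / th^2)) u ∧
     0 ≤ deriv (fun v => (1/2) * (v + A v / lam - B v / th^2)) u ∧
     0 ≤ deriv (fun v => B v / (2 * th^2)) u ∧
     0 ≤ deriv (fun v => B v / (2 * th^2)) u) ↔
    |deriv A u| / lam + deriv B u / th^2 ≤ 1 := by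
  have hAu := hA u
  have hBu := hB u
  have hid : DifferentiableAt ℝ (fun v : ℝ => v) u := differentiableAt_fun_id
  have h1 : deriv (fun v => (1/2 : ℝ) * (v - A v / lam - B v / th^2)) u
      = (1/2) * (1 - deriv A u / lam - deriv B u / th^2) := by
    rw [deriv_const_mul _ (by fun_prop)]
    rw [deriv_fun_sub (by fun_prop) (by fun_prop), deriv_fun_sub (by fun_prop) (by fun_prop)]
    simp [deriv_div_const]
  have h2 : deriv (fun v => (1/2 : ℝ) * (v + A v / lam - B v / th^2)) u
      = (1/2) * (1 + deriv A u / lam - deriv B u / th^2) := by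
    rw [deriv_const_mul _ (by fun_prop)]
    rw [deriv_fun_sub (by fun_prop) (by fun_prop), deriv_fun_add (by fun_prop) (by fun_prop)]
    simp [deriv_div_const]
  have h3 : deriv (fun v => B v / (2 * th^2)) u = deriv B u / (2 * th^2) := by
    simp [deriv_div_const]
  rw [h1, h2, h3]
  have habs : |deriv A u| / lam = |deriv A u / lam| := by
    rw [abs_div, abs_of_pos hlam]
  rw [habs]
  set x := deriv A u / lam with hx
  set y := deriv B u / th^2 with hy
  have hy0 : 0 ≤ y := by positivity
  have h34 : 0 ≤ deriv B u / (2 * th^2) := by positivity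
  constructor
  · rintro ⟨ha, hb, -, -⟩
    rcases abs_cases x with ⟨e, _⟩ | ⟨e, _⟩ <;> rw [e] <;> linarith
  · intro h
    have := abs_nonneg x
    rcases abs_cases x with ⟨e, _⟩ | ⟨e, _⟩ <;> rw [e] at h <;>
      exact ⟨by linarith, by linarith, h34, h34⟩
end

section
/- Let λ > 0, θ > 0, let I ⊂ ℝ be a compact interval, and let A, B : ℝ → ℝ be continuously differentiable with B'(u) ≥ |A'(u)| for all u ∈ I and θ² > max_{u∈I} B'(u). Then there exists ε₀ > 0 such that for all 0 < ε ≤ ε₀ and all u ∈ I, the derivatives with respect to u of all three OVM Maxwellian components are nonnegative: ∂_u M₁(ε, u) ≥ 0, ∂_u M₂(ε, u) ≥ 0, ∂_u M₃(ε, u) ≥ 0. -/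
/-- Monotonicity of the OVM (3-velocities) Maxwellian for small `ε`: if
`B' ≥ |A'|` on the compact interval `[a, b]` and `θ² > B'` there, then there is
`ε₀ > 0` such that for all `0 < ε ≤ ε₀` and all `u ∈ [a, b]` the derivatives of
the three Maxwellian components are nonnegative. -/
theorem ovm_monotone_small_eps
    (lam th : ℝ) (hlam : 0 < lam) (hth : 0 < th)
    (a b : ℝ) (hab : a ≤ b)
    (A B : ℝ → ℝ) (hA : ContDiff ℝ 1 A) (hB : ContDiff ℝ 1 B)
    (hBA : ∀ u ∈ Set.Icc a b, |deriv A u| ≤ deriv B u)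
    (hth2 : ∀ u ∈ Set.Icc a b, deriv B u < th^2) :
    ∃ ε₀ > (0:ℝ), ∀ ε : ℝ, 0 < ε → ε ≤ ε₀ → ∀ u ∈ Set.Icc a b,
      0 ≤ deriv (fun v => v - B v / th^2) u ∧
      0 ≤ deriv (fun v =>
        (lam + th / Real.sqrt ε) / (2 * |lam + th / Real.sqrt ε|^2) * A v
          + B v / th^2) u ∧
      0 ≤ deriv (fun v =>
        -((lam + th / Real.sqrt ε) / (2 * |lam + th / Real.sqrt ε|^2)) * A v
          + B v / th^2) u := by
  refine ⟨4 / th ^ 2, by positivity, ?_⟩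
  intro ε hε hε0 u hu
  have hsε : 0 < Real.sqrt ε := Real.sqrt_pos.mpr hε
  set s := th / Real.sqrt ε with hs
  have hspos : 0 < s := div_pos hth hsε
  have hls : 0 < lam + s := by linarith
  have habs : |lam + s| = lam + s := abs_of_pos hls
  set c := (lam + s) / (2 * |lam + s| ^ 2) with hcdef
  have hc : c = 1 / (2 * (lam + s)) := by
    rw [hcdef, habs]; field_simp
  have hcpos : 0 < c := by rw [hc]; positivity
  -- bound on s
  have hsqrt : Real.sqrt ε ≤ 2 / th := by
    have : ε ≤ (2 / th) ^ 2 := by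
      rw [div_pow]; rw [show (2:ℝ)^2 = 4 by norm_num]; exact hε0
    calc Real.sqrt ε ≤ Real.sqrt ((2 / th) ^ 2) := Real.sqrt_le_sqrt this
      _ = 2 / th := Real.sqrt_sq (by positivity)
  have hsge : th ^ 2 / 2 ≤ s := by
    rw [hs, div_le_div_iff₀ (by norm_num) hsε]
    calc th ^ 2 * Real.sqrt ε ≤ th ^ 2 * (2 / th) :=
          mul_le_mul_of_nonneg_left hsqrt (by positivity)
      _ = th * 2 := by field_simp
  have hcle : c ≤ 1 / th ^ 2 := by
    rw [hc, div_le_div_iff₀ (by positivity) (by positivity)]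
    nlinarith
  have dA : DifferentiableAt ℝ A u := (hA.differentiable one_ne_zero).differentiableAt
  have dB : DifferentiableAt ℝ B u := (hB.differentiable one_ne_zero).differentiableAt
  have hB0 : 0 ≤ deriv B u := le_trans (abs_nonneg _) (hBA u hu)
  have hAB := abs_le.mp (hBA u hu)
  have d1 : deriv (fun v => v - B v / th ^ 2) u = 1 - deriv B u / th ^ 2 := by
    rw [deriv_fun_sub differentiableAt_fun_id (dB.div_const _), deriv_id'',
      deriv_div_const]
  have d2 : deriv (fun v => c * A v + B v / th ^ 2) u
      = c * deriv A u + deriv B u / th ^ 2 := by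
    rw [deriv_fun_add ((dA.const_mul c)) (dB.div_const _), deriv_const_mul _ dA,
      deriv_div_const]
  have d3 : deriv (fun v => -c * A v + B v / th ^ 2) u
      = -c * deriv A u + deriv B u / th ^ 2 := by
    rw [deriv_fun_add ((dA.const_mul (-c))) (dB.div_const _), deriv_const_mul _ dA,
      deriv_div_const]
  refine ⟨?_, ?_, ?_⟩
  · rw [d1]
    have : deriv B u / th ^ 2 ≤ 1 :=
      (div_le_one (by positivity)).mpr (le_of_lt (hth2 u hu))
    linarith
  · rw [d2]
    have h1 : c * -deriv B u ≤ c * deriv A u :=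
      mul_le_mul_of_nonneg_left hAB.1 hcpos.le
    have h2 : c * deriv B u ≤ deriv B u / th ^ 2 := by
      calc c * deriv B u ≤ 1 / th ^ 2 * deriv B u :=
            mul_le_mul_of_nonneg_right hcle hB0
        _ = deriv B u / th ^ 2 := by ring
    have h1' : -(c * deriv B u) ≤ c * deriv A u := by linarith [h1, (by ring : c * -deriv B u = -(c * deriv B u))]
    linarith
  · rw [d3]
    have h1 : c * deriv A u ≤ c * deriv B u :=
      mul_le_mul_of_nonneg_left hAB.2 hcpos.le
    have h2 : c * deriv B u ≤ deriv B u / th ^ 2 := by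
      calc c * deriv B u ≤ 1 / th ^ 2 * deriv B u :=
            mul_le_mul_of_nonneg_right hcle hB0
        _ = deriv B u / th ^ 2 := by ring
    have : -c * deriv A u = -(c * deriv A u) := by ring
    linarith
end

section
/- Let K ∈ ℕ and δt, Δt > 0 with (K+1)·δt ≤ Δt. If τ ∈ ℂ lies in the closed disk of center 1 − δt/Δt and radius δt/Δt, i.e. |τ − (1 − δt/Δt)| ≤ δt/Δt, then the projective forward Euler method is stable at τ: |σ^PFE(τ, Δt, δt, K)| ≤ 1. -/
/-- The projective forward Euler amplification factor
`σ^PFE(τ, Δt, δt, K) = [((Δt − (K+1)δt)/δt + 1)·τ − (Δt − (K+1)δt)/δt]·τ^K`. -/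
noncomputable def sigmaPFE (τ : ℂ) (Δt δt : ℝ) (K : ℕ) : ℂ :=
  (((((Δt - (K + 1 : ℝ) * δt) / δt : ℝ) : ℂ) + 1) * τ
      - (((Δt - (K + 1 : ℝ) * δt) / δt : ℝ) : ℂ)) * τ ^ K

/-- If `(K+1)δt ≤ Δt` and `τ` lies in the closed disk of center `1 − δt/Δt` and
radius `δt/Δt`, then projective forward Euler is stable at `τ`:
`|σ^PFE(τ, Δt, δt, K)| ≤ 1`. -/
theorem pfe_stability_disk
    (K : ℕ) (δt Δt : ℝ) (hδt : 0 < δt) (hΔt : 0 < Δt)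
    (hK : (K + 1 : ℝ) * δt ≤ Δt)
    (τ : ℂ) (hτ : ‖τ - ((1 - δt / Δt : ℝ) : ℂ)‖ ≤ δt / Δt) :
    ‖sigmaPFE τ Δt δt K‖ ≤ 1 := by
  have hK0 : (0:ℝ) ≤ (K:ℝ) := K.cast_nonneg
  have hδΔ : δt ≤ Δt := by nlinarith
  set M : ℝ := (Δt - (K + 1 : ℝ) * δt) / δt with hMdef
  have hM0 : 0 ≤ M := div_nonneg (by linarith) hδt.le
  have hr1 : δt / Δt ≤ 1 := by rw [div_le_one hΔt]; exact hδΔ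
  have habsc : ‖((1 - δt / Δt : ℝ) : ℂ)‖ = 1 - δt / Δt := by
    rw [Complex.norm_real, Real.norm_eq_abs, abs_of_nonneg]; linarith
  have habsτ : ‖τ‖ ≤ 1 := by
    have h := norm_add_le (τ - ((1 - δt / Δt : ℝ) : ℂ)) ((1 - δt / Δt : ℝ) : ℂ)
    simp only [sub_add_cancel] at h
    calc ‖τ‖ ≤ _ := h
      _ ≤ δt / Δt + (1 - δt / Δt) := by rw [habsc]; linarith
      _ = 1 := by ring
  have key : (((M:ℝ):ℂ) + 1) * τ - ((M:ℝ):ℂ)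
      = (((M:ℝ):ℂ) + 1) * (τ - ((1 - δt / Δt : ℝ) : ℂ))
        + (((M + 1) * (1 - δt / Δt) - M : ℝ) : ℂ) := by
    push_cast; ring
  have hd : (M + 1) * (1 - δt / Δt) - M = K * δt / Δt := by
    rw [hMdef]; field_simp; ring
  have hMr : (M + 1) * (δt / Δt) + K * δt / Δt = 1 := by
    rw [hMdef]; field_simp; ring
  have hlin : ‖(((M:ℝ):ℂ) + 1) * τ - ((M:ℝ):ℂ)‖ ≤ 1 := by
    rw [key]
    calc ‖_‖ ≤ ‖(((M:ℝ):ℂ) + 1) * (τ - ((1 - δt / Δt : ℝ) : ℂ))‖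
          + ‖(((M + 1) * (1 - δt / Δt) - M : ℝ) : ℂ)‖ := norm_add_le _ _
      _ = (M + 1) * ‖τ - ((1 - δt / Δt : ℝ) : ℂ)‖ + (K * δt / Δt) := by
          rw [norm_mul, hd, Complex.norm_real, Real.norm_eq_abs, abs_of_nonneg (by positivity)]
          norm_cast
          rw [Real.norm_eq_abs, abs_of_nonneg (by linarith : (0:ℝ) ≤ M + 1)]
      _ ≤ (M + 1) * (δt / Δt) + K * δt / Δt := by
          have := mul_le_mul_of_nonneg_left hτ (by linarith : (0:ℝ) ≤ M + 1)
          linarith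
      _ = 1 := hMr
  rw [sigmaPFE, norm_mul, norm_pow]
  calc ‖(((M:ℝ):ℂ) + 1) * τ - ((M:ℝ):ℂ)‖ * ‖τ‖ ^ K
      ≤ 1 * 1 ^ K := by
        apply mul_le_mul hlin (pow_le_pow_left₀ (norm_nonneg _) habsτ K)
          (by positivity) (by norm_num)
    _ = 1 := by simp
end
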